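/- Let α > 0 and V₀ ∈ ℝ, and define y(x) = cosh²(αx). Then for every x ≠ 0: (i) (y'(x))²·(y(x)² − y(x)) = 4α²·y(x)²·(1−y(x))²; and (ii) with R(t) = t² − t, κ = α², ρ = −1, σ = 0, ρ₁ = −V₀/α², σ₁ = V₀/α² + 3/4, one has (κ·y²(1−y)²/R(y))·[ 1/(y²(1−y)²) + 2/R(y) + (1−2y)(2y+ρ)/(y(1−y)R(y)) − 5(2y+ρ)²/(4R(y)²) ] − κ·(y² + (ρ+ρ₁)y + σ+σ₁)/R(y) = V₀/cosh²(αx), where y = y(x). -/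

import Mathlib

/-! With `y = cosh²(αx)` one has `y' = 2α cosh(αx) sinh(αx)`, so `y'² = 4α² y (y - 1)`, which is (i).
Part (ii) is then a rational identity in `y` alone, valid as soon as `y ∉ {0, 1}`; for `x ≠ 0`
this holds because `cosh²(αx) - 1 = sinh²(αx) ≠ 0`. -/

open Real

theorem hasDerivAt_cosh_mul_sq (a x : ℝ) :
    HasDerivAt (fun x => cosh (a * x) ^ 2) (2 * a * cosh (a * x) * sinh (a * x)) x := by
  refine (((hasDerivAt_id' x).const_mul a).cosh.fun_pow 2).congr_deriv ?_
  push_cast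
  ring

theorem cosh_sq_ne_one {a : ℝ} (ha : a ≠ 0) : cosh a ^ 2 ≠ 1 := by
  rw [← sub_ne_zero, ← sinh_sq]
  exact pow_ne_zero 2 (sinh_ne_zero.mpr ha)

theorem cosh_mul_sq_solves_iwata_ode (a x : ℝ) :
    (deriv (fun x => cosh (a * x) ^ 2) x) ^ 2 * ((cosh (a * x) ^ 2) ^ 2 - cosh (a * x) ^ 2)
      = 4 * a ^ 2 * (cosh (a * x) ^ 2) ^ 2 * (1 - cosh (a * x) ^ 2) ^ 2 := by
  rw [(hasDerivAt_cosh_mul_sq a x).deriv]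
  linear_combination (4 * a ^ 2 * cosh (a * x) ^ 4 * (cosh (a * x) ^ 2 - 1)) * sinh_sq (a * x)

theorem iwataPotential_poschlTeller {α V₀ y : ℝ} (hα : α ≠ 0) (hy₀ : y ≠ 0) (hy₁ : y ≠ 1) :
    (α ^ 2 * y ^ 2 * (1 - y) ^ 2 / (y ^ 2 - y)) *
          (1 / (y ^ 2 * (1 - y) ^ 2) + 2 / (y ^ 2 - y)
            + (1 - 2 * y) * (2 * y + (-1)) / (y * (1 - y) * (y ^ 2 - y))
            - 5 * (2 * y + (-1)) ^ 2 / (4 * (y ^ 2 - y) ^ 2))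
        - α ^ 2 * (y ^ 2 + ((-1) + (-(V₀ / α ^ 2))) * y + 0 + (V₀ / α ^ 2 + 3 / 4))
            / (y ^ 2 - y)
      = V₀ / y := by
  have h₁y : 1 - y ≠ 0 := sub_ne_zero.mpr (Ne.symm hy₁)
  have hR : y ^ 2 - y ≠ 0 := by
    rw [sq, ← mul_sub_one]
    exact mul_ne_zero hy₀ (sub_ne_zero.mpr hy₁)
  field_simp
  ring

theorem stmt_3 (α V₀ : ℝ) (hα : 0 < α) (y : ℝ → ℝ)
    (hy : ∀ x : ℝ, y x = Real.cosh (α * x) ^ 2) :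
    ∀ x : ℝ, x ≠ 0 →
      (deriv y x) ^ 2 * ((y x) ^ 2 - y x)
          = 4 * α ^ 2 * (y x) ^ 2 * (1 - y x) ^ 2 ∧
      (α ^ 2 * (y x) ^ 2 * (1 - y x) ^ 2 / ((y x) ^ 2 - y x)) *
            (1 / ((y x) ^ 2 * (1 - y x) ^ 2) + 2 / ((y x) ^ 2 - y x)
              + (1 - 2 * y x) * (2 * y x + (-1)) / (y x * (1 - y x) * ((y x) ^ 2 - y x))
              - 5 * (2 * y x + (-1)) ^ 2 / (4 * ((y x) ^ 2 - y x) ^ 2))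
          - α ^ 2 * ((y x) ^ 2 + ((-1) + (-(V₀ / α ^ 2))) * y x + 0 + (V₀ / α ^ 2 + 3 / 4))
              / ((y x) ^ 2 - y x)
        = V₀ / Real.cosh (α * x) ^ 2 := by
  obtain rfl : y = fun x => cosh (α * x) ^ 2 := funext hy
  intro x hx
  exact ⟨cosh_mul_sq_solves_iwata_ode α x,
    iwataPotential_poschlTeller hα.ne' (pow_ne_zero 2 (cosh_pos _).ne')
      (cosh_sq_ne_one (mul_ne_zero hα.ne' hx))⟩
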